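/- Let T be a quasitriangular bounded linear operator on a complex Hilbert space H and let {P_n} be a corresponding filtration, i.e. ‖(I−P_n) T P_n‖ → 0. Let T_n = P_n T restricted to Ran P_n. Then for every λ ∈ ℂ, j_{T_n}(λ) converges to j_T(λ) as n → ∞. -/

import Mathlib

open Filter ContinuousLinearMap

/-- The injectivity radius `j_T(z) = inf {‖(T - z)h‖ : ‖h‖ = 1}`. -/
noncomputable def injRad {H : Type*} [NormedAddCommGroup H] [InnerProductSpace ℂ H]
    (T : H →L[ℂ] H) (z : ℂ) : ℝ :=
  sInf {r : ℝ | ∃ h : H, ‖h‖ = 1 ∧ r = ‖T h - z • h‖}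

/-- `j_{Tₙ}(z) = inf {‖Pₙ T h - z h‖ : h ∈ Ran Pₙ, ‖h‖ = 1}` for the finite section
`Tₙ = Pₙ T|_{Ran Pₙ}`. -/
noncomputable def injRadSec {H : Type*} [NormedAddCommGroup H] [InnerProductSpace ℂ H]
    (T P : H →L[ℂ] H) (z : ℂ) : ℝ :=
  sInf {r : ℝ | ∃ h : H, h ∈ LinearMap.range (P : H →ₗ[ℂ] H) ∧ ‖h‖ = 1 ∧ r = ‖P (T h) - z • h‖}

/-- A filtration: an increasing sequence of finite-rank orthogonal projections
whose ranges have dense union. -/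
structure Filtration (H : Type*) [NormedAddCommGroup H] [InnerProductSpace ℂ H]
    [CompleteSpace H] where
  P : ℕ → H →L[ℂ] H
  idem : ∀ n, (P n) ∘L (P n) = P n
  selfadj : ∀ n, IsSelfAdjoint (P n)
  finiteRank : ∀ n, FiniteDimensional ℂ (LinearMap.range (P n : H →ₗ[ℂ] H))
  mono : ∀ n, LinearMap.range (P n : H →ₗ[ℂ] H) ≤ LinearMap.range (P (n + 1) : H →ₗ[ℂ] H)
  dense : Dense (⋃ n, (LinearMap.range (P n : H →ₗ[ℂ] H) : Set H))

open Topology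

/-! Restricting to `Ran Pₙ` costs at most `εₙ = ‖(I - Pₙ) T Pₙ‖`: for a unit `h ∈ Ran Pₙ`,
`‖(T - λ)h‖ ≤ ‖Pₙ T h - λ h‖ + εₙ`, so `j_T(λ) ≤ j_{Tₙ}(λ) + εₙ`. Conversely `Pₙ → I` strongly
(the `Pₙ` are contractions converging to `I` on the dense union of their ranges), so every unit `h`
is a limit of unit vectors `wₙ ∈ Ran Pₙ`, and `j_{Tₙ}(λ) ≤ ‖Pₙ (T - λ) wₙ‖ ≤ ‖(T - λ) wₙ‖ → ‖(T - λ) h‖`. -/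

section InjRad

variable {H : Type*} [NormedAddCommGroup H] [InnerProductSpace ℂ H] (T : H →L[ℂ] H) (z : ℂ)

lemma injRad_le_norm_sub_smul {h : H} (hh : ‖h‖ = 1) : injRad T z ≤ ‖T h - z • h‖ :=
  csInf_le ⟨0, by rintro r ⟨h, -, rfl⟩; positivity⟩ ⟨h, hh, rfl⟩

lemma exists_norm_sub_smul_lt_of_injRad_lt [Nontrivial H] {r : ℝ} (hr : injRad T z < r) :
    ∃ h : H, ‖h‖ = 1 ∧ ‖T h - z • h‖ < r := by
  obtain ⟨u, hu⟩ := exists_norm_eq H zero_le_one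
  obtain ⟨_, ⟨h, hh, rfl⟩, hlt⟩ := exists_lt_of_csInf_lt (by exact ⟨_, u, hu, rfl⟩) hr
  exact ⟨h, hh, hlt⟩

lemma injRadSec_le_norm_sub_smul {P : H →L[ℂ] H} {w : H} (hw : w ∈ LinearMap.range (P : H →ₗ[ℂ] H))
    (hw1 : ‖w‖ = 1) : injRadSec T P z ≤ ‖P (T w) - z • w‖ :=
  csInf_le ⟨0, by rintro r ⟨h, -, -, rfl⟩; positivity⟩ ⟨w, hw, hw1, rfl⟩

lemma injRad_le_injRadSec_add {P : H →L[ℂ] H} (hP : IsIdempotentElem P)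
    (hne : ∃ h ∈ LinearMap.range (P : H →ₗ[ℂ] H), ‖h‖ = 1) :
    injRad T z ≤ injRadSec T P z + ‖((1 : H →L[ℂ] H) - P) ∘L T ∘L P‖ := by
  obtain ⟨u, hu, hu1⟩ := hne
  rw [← sub_le_iff_le_add]
  refine le_csInf ⟨_, u, hu, hu1, rfl⟩ ?_
  rintro _ ⟨h, hh, hh1, rfl⟩
  have hPh : P h = h := by
    obtain ⟨y, rfl⟩ := hh
    exact congr($hP y)
  have hdefect : T h - P (T h) = (((1 : H →L[ℂ] H) - P) ∘L T ∘L P) h := by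
    simp [hPh]
  calc injRad T z - ‖((1 : H →L[ℂ] H) - P) ∘L T ∘L P‖
      ≤ ‖T h - z • h‖ - ‖T h - P (T h)‖ := by
        gcongr
        · exact injRad_le_norm_sub_smul T z hh1
        · simpa [hdefect, hh1] using le_opNorm (((1 : H →L[ℂ] H) - P) ∘L T ∘L P) h
    _ ≤ ‖P (T h) - z • h‖ := by
        linarith [norm_sub_le_norm_sub_add_norm_sub (T h) (P (T h)) (z • h)]

end InjRad

namespace Filtration

variable {H : Type*} [NormedAddCommGroup H] [InnerProductSpace ℂ H] [CompleteSpace H]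
  (F : Filtration H)

lemma isStarProjection (n : ℕ) : IsStarProjection (F.P n) := ⟨F.idem n, F.selfadj n⟩

lemma apply_of_mem_range {n : ℕ} {h : H} (hh : h ∈ LinearMap.range (F.P n : H →ₗ[ℂ] H)) :
    F.P n h = h := by
  obtain ⟨y, rfl⟩ := hh
  exact congr($(F.idem n) y)

lemma range_mono : Monotone fun n => LinearMap.range (F.P n : H →ₗ[ℂ] H) :=
  monotone_nat_of_le_succ F.mono

lemma tendsto_apply (x : H) : Tendsto (fun n => F.P n x) atTop (𝓝 x) := by
  have hequi : Equicontinuous fun n => ⇑(F.P n) :=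
    (LipschitzWith.uniformEquicontinuous _ 1 fun n =>
      (F.P n).lipschitz.weaken ((F.isStarProjection n).norm_le)).equicontinuous
  have hclosed := hequi.isClosed_setOfPred_tendsto (l := atTop) continuous_id
  refine hclosed.closure_subset_iff.2 ?_ (F.dense x)
  rintro y ⟨_, ⟨m, rfl⟩, hy⟩
  refine tendsto_const_nhds.congr' ?_
  filter_upwards [eventually_ge_atTop m] with n hn
  exact (F.apply_of_mem_range (F.range_mono hn hy)).symm

lemma exists_tendsto_norm_eq_one_mem_range {h : H} (hh : ‖h‖ = 1) :
    ∃ w : ℕ → H, Tendsto w atTop (𝓝 h) ∧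
      ∀ᶠ n in atTop, w n ∈ LinearMap.range (F.P n : H →ₗ[ℂ] H) ∧ ‖w n‖ = 1 := by
  have hne : h ≠ 0 := norm_ne_zero_iff.1 (by simp [hh])
  refine ⟨fun n => (‖F.P n h‖ : ℂ)⁻¹ • F.P n h, ?_, ?_⟩
  · have hnorm : Tendsto (fun n => (‖F.P n h‖ : ℂ)⁻¹) atTop (𝓝 1) := by
      simpa [hh] using ((Complex.continuous_ofReal.tendsto _).comp
        (F.tendsto_apply h).norm).inv₀ (by simp [hh])
    simpa using hnorm.smul (F.tendsto_apply h)
  · filter_upwards [(F.tendsto_apply h).eventually_ne hne] with n hn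
    exact ⟨Submodule.smul_mem _ _ (LinearMap.mem_range_self _ h), norm_smul_inv_norm hn⟩

variable (T : H →L[ℂ] H) (z : ℂ)

lemma eventually_injRad_le_injRadSec_add [Nontrivial H] :
    ∀ᶠ n in atTop,
      injRad T z ≤ injRadSec T (F.P n) z + ‖((1 : H →L[ℂ] H) - F.P n) ∘L T ∘L F.P n‖ := by
  obtain ⟨u, hu⟩ := exists_norm_eq H zero_le_one
  obtain ⟨w, -, hw⟩ := F.exists_tendsto_norm_eq_one_mem_range hu
  filter_upwards [hw] with n ⟨hwn, hwn1⟩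
  exact injRad_le_injRadSec_add T z (F.idem n) ⟨w n, hwn, hwn1⟩

lemma eventually_injRadSec_lt {h : H} (hh : ‖h‖ = 1) {r : ℝ} (hr : ‖T h - z • h‖ < r) :
    ∀ᶠ n in atTop, injRadSec T (F.P n) z < r := by
  obtain ⟨w, hw, hw1⟩ := F.exists_tendsto_norm_eq_one_mem_range hh
  have hlim : Tendsto (fun n => ‖T (w n) - z • w n‖) atTop (𝓝 ‖T h - z • h‖) :=
    (((T.continuous.tendsto h).comp hw).sub (hw.const_smul z)).norm
  filter_upwards [hw1, hlim.eventually (gt_mem_nhds hr)] with n ⟨hwn, hwn1⟩ hlt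
  calc injRadSec T (F.P n) z ≤ ‖F.P n (T (w n)) - z • w n‖ :=
        injRadSec_le_norm_sub_smul T z hwn hwn1
    _ = ‖F.P n (T (w n) - z • w n)‖ := by rw [map_sub, map_smul, F.apply_of_mem_range hwn]
    _ ≤ ‖T (w n) - z • w n‖ := by
        simpa only [one_mul] using (F.P n).le_of_opNorm_le (F.isStarProjection n).norm_le _
    _ < r := hlt

end Filtration

theorem injRadSec_tendsto {H : Type*} [NormedAddCommGroup H] [InnerProductSpace ℂ H] [CompleteSpace H]
    (T : H →L[ℂ] H) (F : Filtration H)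
    (hF : Tendsto (fun n => ‖((1 : H →L[ℂ] H) - F.P n) ∘L T ∘L F.P n‖) atTop (nhds 0))
    (lam : ℂ) :
    Tendsto (fun n => injRadSec T (F.P n) lam) atTop (nhds (injRad T lam)) := by
  rcases subsingleton_or_nontrivial H with hH | hH
  · -- no unit vectors, so both infima are the junk value `sInf ∅ = 0`
    have hno_unit : ∀ h : H, ‖h‖ ≠ 1 := by simp [Subsingleton.elim _ (0 : H)]
    simp [injRad, injRadSec, hno_unit]
  refine tendsto_order.2 ⟨fun a ha => ?_, fun b hb => ?_⟩
  · filter_upwards [F.eventually_injRad_le_injRadSec_add T lam,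
      hF.eventually (gt_mem_nhds (sub_pos.2 ha))] with n hle hsmall
    linarith
  · obtain ⟨h, hh, hlt⟩ := exists_norm_sub_smul_lt_of_injRad_lt T lam hb
    exact F.eventually_injRadSec_lt T lam hh hlt
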